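/- arXiv:1806.11443 — 4 statements merged into one kernel-verified Lean document; each statement's English description precedes it below -/
import Mathlib

section
/- Γ̃(R[x]) is complete if and only if R is isomorphic to a subring of a product of two integral domains, or every ideal of R generated by finitely many zero-divisors has nonzero annihilator. -/
/-- x is a zero-divisor (including 0 in a nontrivial ring). -/
def IsZD {R : Type} [CommRing R] (x : R) : Prop := ∃ y : R, y ≠ 0 ∧ x * y = 0

/-- Adjacency relation of the graph Γ̃(R): xy = 0 or x + y ∈ Z(R). -/
def GTAdj {R : Type} [CommRing R] (x y : R) : Prop := x * y = 0 ∨ IsZD (x + y)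

/-- Γ̃(R) is a complete graph: any two distinct nonzero zero-divisors are adjacent. -/
def GTComplete (R : Type) [CommRing R] : Prop :=
  ∀ x y : R, IsZD x → x ≠ 0 → IsZD y → y ≠ 0 → x ≠ y → GTAdj x y

/-- Auxiliary: R embeds as a subring in A × B with A, B integral domains. -/
def EmbedsInProdDomainsAux (R A B : Type) [CommRing R] [CommRing A] [CommRing B] : Prop :=
  IsDomain A ∧ IsDomain B ∧ ∃ f : R →+* A × B, Function.Injective f

/-- R is (up to isomorphism) a subring of a product of two integral domains. -/
def EmbedsInProdDomains (R : Type) [iR : CommRing R] : Prop :=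
  ∃ (A B : Type) (iA : CommRing A) (iB : CommRing B), @EmbedsInProdDomainsAux R A B iR iA iB

/-- R satisfies property A: every finitely generated ideal contained in Z(R)
has nonzero annihilator. -/
def PropertyA (R : Type) [CommRing R] : Prop :=
  ∀ I : Ideal R, I.FG → (∀ x ∈ I, IsZD x) → ∃ r : R, r ≠ 0 ∧ ∀ x ∈ I, r * x = 0

/-- Every ideal of R generated by finitely many zero-divisors has nonzero annihilator. -/
def FinZDGenAnn (R : Type) [CommRing R] : Prop :=
  ∀ s : Finset R, (∀ x ∈ s, IsZD x) →
    ∃ r : R, r ≠ 0 ∧ ∀ x ∈ Ideal.span (s : Set R), r * x = 0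

/-!
By McCoy's theorem a polynomial `p ∈ R[X]` is a zero-divisor iff the annihilator in `R` of its
content ideal is nonzero, and if `deg p < k` the annihilator of `p + q X^k` is the intersection of
those of `p` and `q`.

If `R ⊆ D₁ × D₂`, the kernels of the two projections extend to primes `P, Q` of `R[X]` with
`P ⊓ Q = 0`; every zero-divisor lies in `P` or in `Q`, and this makes `Γ̃(R[X])` complete. If
finitely generated ideals of zero-divisors have nonzero annihilators, the coefficients of two
zero-divisors `f, g` have a common nonzero annihilator, which also kills `f + g`.

Conversely, a finite set of zero-divisors without common annihilator yields `a ∈ R` and `G ∈ R[X]`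
with `I = ann(a)` and `J = ann_R(G)` nonzero but `I ⊓ J = 0`. Completeness of `Γ̃(R[X])`, applied to
polynomials built from constants and shifts `G X^k`, gives `a G = 0` and shows that neither `I` nor
`J` contains two nonzero elements with zero product. Then `ann I` and `ann J` are primes meeting in
`0`, and `R` embeds in `R / ann I × R / ann J`.
-/

open Polynomial
open scoped nonZeroDivisors

section Ideals

variable {R : Type} [CommRing R]

lemma isZD_iff_notMem_nonZeroDivisors {x : R} : IsZD x ↔ x ∉ R⁰ := by
  simp only [IsZD, mem_nonZeroDivisors_iff_right, not_forall, exists_prop, mul_comm x]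
  exact exists_congr fun y => and_comm

lemma finZDGenAnn_iff : FinZDGenAnn R ↔
    ∀ s : Finset R, (∀ x ∈ s, IsZD x) → (Ideal.span (s : Set R)).annihilator ≠ ⊥ := by
  simp only [FinZDGenAnn, Submodule.ne_bot_iff, Submodule.mem_annihilator, smul_eq_mul]
  exact forall₂_congr fun _ _ => exists_congr fun _ => and_comm

lemma Ideal.isPrime_annihilator_of_mul_eq_zero {I : Ideal R} (hI : I ≠ ⊥)
    (h : ∀ u ∈ I, ∀ v ∈ I, u * v = 0 → u = 0 ∨ v = 0) : I.annihilator.IsPrime := by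
  refine ⟨mt Submodule.annihilator_eq_top_iff.mp hI, fun {x y} hxy => ?_⟩
  by_contra! hne
  obtain ⟨hx, hy⟩ := hne
  simp only [Submodule.mem_annihilator, smul_eq_mul, not_forall] at hx hy hxy
  obtain ⟨u, hu, hxu⟩ := hx
  obtain ⟨v, hv, hyv⟩ := hy
  have : x * u * (y * v) = 0 := by
    rw [show x * u * (y * v) = x * y * u * v by ring, hxy u hu, zero_mul]
  exact (h _ (I.mul_mem_left x hu) _ (I.mul_mem_left y hv) this).elim hxu hyv

lemma embedsInProdDomains_iff :
    EmbedsInProdDomains R ↔ ∃ P Q : Ideal R, P.IsPrime ∧ Q.IsPrime ∧ Disjoint P Q := by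
  constructor
  · rintro ⟨A, B, _, _, _, _, φ, hφ⟩
    refine ⟨RingHom.ker ((RingHom.fst A B).comp φ), RingHom.ker ((RingHom.snd A B).comp φ),
      RingHom.ker_isPrime _, RingHom.ker_isPrime _, Submodule.disjoint_def.mpr fun r h₁ h₂ => ?_⟩
    exact (injective_iff_map_eq_zero φ).mp hφ r (Prod.ext h₁ h₂)
  · rintro ⟨P, Q, _, _, hPQ⟩
    refine ⟨R ⧸ P, R ⧸ Q, _, _, inferInstance, inferInstance,
      (Ideal.Quotient.mk P).prod (Ideal.Quotient.mk Q), (injective_iff_map_eq_zero _).mpr ?_⟩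
    intro r hr
    exact Submodule.disjoint_def.mp hPQ r (Ideal.Quotient.eq_zero_iff_mem.mp congr(($hr).1))
      (Ideal.Quotient.eq_zero_iff_mem.mp congr(($hr).2))

lemma embedsInProdDomains_polynomial (h : EmbedsInProdDomains R) :
    EmbedsInProdDomains R[X] := by
  obtain ⟨P, Q, _, _, hPQ⟩ := embedsInProdDomains_iff.mp h
  refine embedsInProdDomains_iff.mpr ⟨P.map C, Q.map C, Ideal.isPrime_map_C_of_isPrime,
    Ideal.isPrime_map_C_of_isPrime, Submodule.disjoint_def.mpr fun p hP hQ => ?_⟩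
  rw [Ideal.mem_map_C_iff] at hP hQ
  ext n
  exact Submodule.disjoint_def.mp hPQ _ (hP n) (hQ n)

lemma mem_or_mem_of_isZD {P Q : Ideal R} [P.IsPrime] [Q.IsPrime] (hPQ : Disjoint P Q) {x : R}
    (hx : IsZD x) : x ∈ P ∨ x ∈ Q := by
  obtain ⟨w, hw, hxw⟩ := hx
  by_contra! h
  exact hw (Submodule.disjoint_def.mp hPQ w
    ((Ideal.IsPrime.mem_or_mem ‹_› (hxw ▸ P.zero_mem)).resolve_left h.1)
    ((Ideal.IsPrime.mem_or_mem ‹_› (hxw ▸ Q.zero_mem)).resolve_left h.2))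

lemma isZD_add_of_mem {P Q : Ideal R} [Q.IsPrime] (hPQ : Disjoint P Q) {x y : R} (hx : IsZD x)
    (hx0 : x ≠ 0) (hxP : x ∈ P) (hyP : y ∈ P) : IsZD (x + y) := by
  obtain ⟨w, hw, hxw⟩ := hx
  have hxQ : x ∉ Q := fun hxQ => hx0 (Submodule.disjoint_def.mp hPQ x hxP hxQ)
  have hwQ : w ∈ Q := (Ideal.IsPrime.mem_or_mem ‹_› (hxw ▸ Q.zero_mem)).resolve_left hxQ
  exact ⟨w, hw, Submodule.disjoint_def.mp hPQ _ (P.mul_mem_right w (P.add_mem hxP hyP))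
    (Q.mul_mem_left _ hwQ)⟩

lemma gtComplete_of_disjoint {P Q : Ideal R} [P.IsPrime] [Q.IsPrime] (hPQ : Disjoint P Q) :
    GTComplete R := by
  have mul_eq_zero {x y : R} (hx : x ∈ P) (hy : y ∈ Q) : x * y = 0 :=
    Submodule.disjoint_def.mp hPQ _ (P.mul_mem_right y hx) (Q.mul_mem_left x hy)
  intro x y hx hx0 hy _ _
  rcases mem_or_mem_of_isZD hPQ hx with hxP | hxQ <;>
    rcases mem_or_mem_of_isZD hPQ hy with hyP | hyQ
  · exact .inr (isZD_add_of_mem hPQ hx hx0 hxP hyP)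
  · exact .inl (mul_eq_zero hxP hyQ)
  · exact .inl (mul_comm x y ▸ mul_eq_zero hyP hxQ)
  · exact .inr (isZD_add_of_mem hPQ.symm hx hx0 hxQ hyQ)

end Ideals

namespace Polynomial

variable {R : Type} [CommRing R]

lemma contentIdeal_add_le (p q : R[X]) :
    (p + q).contentIdeal ≤ p.contentIdeal ⊔ q.contentIdeal := by
  rw [contentIdeal_def, Ideal.span_le]
  intro c hc
  obtain ⟨n, -, rfl⟩ := mem_coeffs_iff.mp hc
  rw [coeff_add]
  exact add_mem (Ideal.mem_sup_left (coeff_mem_contentIdeal p n))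
    (Ideal.mem_sup_right (coeff_mem_contentIdeal q n))

lemma mem_annihilator_contentIdeal {p : R[X]} {r : R} :
    r ∈ p.contentIdeal.annihilator ↔ r • p = 0 := by
  constructor
  · intro h
    ext i
    simpa using Submodule.mem_annihilator.mp h _ (coeff_mem_contentIdeal p i)
  · intro h
    rw [contentIdeal_def, Submodule.mem_annihilator_span]
    rintro ⟨c, hc⟩
    obtain ⟨n, -, rfl⟩ := mem_coeffs_iff.mp hc
    simpa using congr(coeff $h n)

lemma mem_annihilator_contentIdeal_C {a r : R} :
    r ∈ (C a).contentIdeal.annihilator ↔ r * a = 0 := by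
  rw [contentIdeal_C, Submodule.mem_annihilator_span_singleton, smul_eq_mul]

lemma isZD_iff_annihilator_contentIdeal_ne_bot {p : R[X]} :
    IsZD p ↔ p.contentIdeal.annihilator ≠ ⊥ := by
  simp only [isZD_iff_notMem_nonZeroDivisors, notMem_nonZeroDivisors_iff, Submodule.ne_bot_iff,
    mem_annihilator_contentIdeal]
  exact exists_congr fun a => and_comm

lemma isZD_coeff {p : R[X]} (hp : IsZD p) (n : ℕ) : IsZD (p.coeff n) := by
  obtain ⟨c, hc, hc0⟩ :=
    (Submodule.ne_bot_iff _).mp (isZD_iff_annihilator_contentIdeal_ne_bot.mp hp)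
  refine ⟨c, hc0, ?_⟩
  rw [mul_comm]
  exact Submodule.mem_annihilator.mp hc _ (coeff_mem_contentIdeal p n)

lemma add_mul_X_pow_eq_zero_iff {p q : R[X]} {k : ℕ} (hp : p.natDegree < k) :
    p + q * X ^ k = 0 ↔ p = 0 ∧ q = 0 := by
  refine ⟨fun h => ?_, fun ⟨hp, hq⟩ => by simp [hp, hq]⟩
  have hp0 : p = 0 := by
    ext i
    have hi := congr(coeff $h i)
    rw [coeff_add, coeff_mul_X_pow', coeff_zero] at hi
    split_ifs at hi with hki
    · exact coeff_eq_zero_of_natDegree_lt (by omega)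
    · simpa using hi
  exact ⟨hp0, mul_X_pow_eq_zero (by simpa [hp0] using h)⟩

lemma annihilator_contentIdeal_add_mul_X_pow {p q : R[X]} {k : ℕ} (hp : p.natDegree < k) :
    (p + q * X ^ k).contentIdeal.annihilator =
      p.contentIdeal.annihilator ⊓ q.contentIdeal.annihilator := by
  ext r
  rw [Submodule.mem_inf]
  simp only [mem_annihilator_contentIdeal]
  rw [smul_add, ← smul_mul_assoc]
  exact add_mul_X_pow_eq_zero_iff ((natDegree_smul_le r p).trans_lt hp)

lemma isZD_add_mul_X_pow_iff {p q : R[X]} {k : ℕ} (hp : p.natDegree < k) :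
    IsZD (p + q * X ^ k) ↔ ¬Disjoint p.contentIdeal.annihilator q.contentIdeal.annihilator := by
  rw [isZD_iff_annihilator_contentIdeal_ne_bot, annihilator_contentIdeal_add_mul_X_pow hp,
    disjoint_iff]

lemma exists_annihilator_contentIdeal_eq (s : Finset R) :
    ∃ p : R[X], p.contentIdeal.annihilator = (Ideal.span (s : Set R)).annihilator := by
  classical
  induction s using Finset.induction_on with
  | empty => exact ⟨0, by simp⟩
  | insert a s _ ih =>
    obtain ⟨p, hp⟩ := ih
    refine ⟨C a + p * X ^ 1, ?_⟩
    rw [annihilator_contentIdeal_add_mul_X_pow (by simp), hp, contentIdeal_C, Finset.coe_insert,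
      Ideal.span_insert, Submodule.annihilator_sup]

lemma exists_annihilator_contentIdeal_disjoint [Nontrivial R] (s : Finset R)
    (hs : ∀ x ∈ s, IsZD x) (h : (Ideal.span (s : Set R)).annihilator = ⊥) :
    ∃ (a : R) (G : R[X]), (C a).contentIdeal.annihilator ≠ ⊥ ∧ G.contentIdeal.annihilator ≠ ⊥ ∧
      Disjoint (C a).contentIdeal.annihilator G.contentIdeal.annihilator := by
  classical
  induction s using Finset.induction_on with
  | empty => simp [Submodule.annihilator_bot] at h
  | insert a s _ ih =>
    by_cases hs' : (Ideal.span (s : Set R)).annihilator = ⊥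
    · exact ih (fun x hx => hs x (Finset.mem_insert_of_mem hx)) hs'
    obtain ⟨G, hG⟩ := exists_annihilator_contentIdeal_eq s
    obtain ⟨c, hc, hac⟩ := hs a (Finset.mem_insert_self a s)
    refine ⟨a, G, (Submodule.ne_bot_iff _).mpr ⟨c, ?_, hc⟩, hG ▸ hs', ?_⟩
    · rwa [mem_annihilator_contentIdeal_C, mul_comm]
    · rwa [Finset.coe_insert, Ideal.span_insert, Submodule.annihilator_sup, ← contentIdeal_C,
        ← hG, ← disjoint_iff] at h

lemma gtComplete_of_finZDGenAnn (h : FinZDGenAnn R) : GTComplete R[X] := by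
  classical
  intro f g hf _ hg _ _
  have hs : ∀ x ∈ f.coeffs ∪ g.coeffs, IsZD x := by
    intro x hx
    rcases Finset.mem_union.mp hx with hx | hx <;> obtain ⟨n, -, rfl⟩ := mem_coeffs_iff.mp hx
    exacts [isZD_coeff hf n, isZD_coeff hg n]
  have hle : (f + g).contentIdeal ≤ Ideal.span ↑(f.coeffs ∪ g.coeffs) := by
    rw [Finset.coe_union, Ideal.span_union]
    exact contentIdeal_add_le f g
  exact .inr (isZD_iff_annihilator_contentIdeal_ne_bot.mpr
    (ne_bot_of_le_ne_bot (finZDGenAnn_iff.mp h _ hs) (Submodule.annihilator_mono hle)))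

section Complete

variable (hC : GTComplete R[X])
include hC

lemma smul_eq_zero_or_not_disjoint {u : R} {G : R[X]}
    (hu : (C u).contentIdeal.annihilator ≠ ⊥) (hG : G.contentIdeal.annihilator ≠ ⊥) :
    u • G = 0 ∨ ¬Disjoint (C u).contentIdeal.annihilator G.contentIdeal.annihilator := by
  rcases eq_or_ne u 0 with rfl | hu0
  · simp
  rcases eq_or_ne G 0 with rfl | hG0
  · simp
  have hGX : (G * X ^ 1).contentIdeal.annihilator = G.contentIdeal.annihilator := by
    simpa [Submodule.annihilator_bot] using
      annihilator_contentIdeal_add_mul_X_pow (p := 0) (q := G) zero_lt_one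
  have hne : C u ≠ G * X ^ 1 := fun h => hu0 (by simpa using congr(coeff $h 0))
  rcases hC _ _ (isZD_iff_annihilator_contentIdeal_ne_bot.mpr hu) (C_ne_zero.mpr hu0)
    (isZD_iff_annihilator_contentIdeal_ne_bot.mpr (hGX ▸ hG)) (by simpa using hG0) hne with h | h
  · left
    rw [smul_eq_C_mul]
    exact mul_X_pow_eq_zero (by rw [mul_assoc, h])
  · exact .inr ((isZD_add_mul_X_pow_iff (by simp)).mp h)

/-- The shifts are chosen so that `(C u + G X^k) (C v + F X) = v G X^k`, while the coefficients of
`F` and of `G` occupy disjoint degree ranges in the sum. -/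
lemma disjoint_annihilator_contentIdeal_C {F G : R[X]} (hG0 : G ≠ 0)
    (hFG : Disjoint F.contentIdeal.annihilator G.contentIdeal.annihilator) (hmul : F * G = 0)
    {u v : R} (hu : u ∈ F.contentIdeal.annihilator) (hv : v ∈ F.contentIdeal.annihilator)
    (hu0 : u ≠ 0) (hv0 : v ≠ 0) (huv : u * v = 0) :
    Disjoint (C u).contentIdeal.annihilator G.contentIdeal.annihilator := by
  refine Submodule.disjoint_def.mpr fun e he₁ he₂ => by_contra fun he0 => ?_
  set k := F.natDegree + 2 with hk
  have hdeg₀ (c : R) {n : ℕ} (hn : 0 < n) : (C c).natDegree < n := by simpa using hn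
  have hdeg (c : R) {F' : R[X]} (hF' : F'.natDegree = F.natDegree) :
      (C c + F' * X ^ 1).natDegree < k := by
    have := natDegree_mul_le (p := F') (q := X ^ 1)
    have := natDegree_X_pow_le (R := R) 1
    rw [natDegree_C_add]
    omega
  have hzd₁ : IsZD (C u + G * X ^ k) := (isZD_add_mul_X_pow_iff (hdeg₀ u (by omega))).mpr
    fun h => he0 (Submodule.disjoint_def.mp h e he₁ he₂)
  have hzd₂ : IsZD (C v + F * X ^ 1) := (isZD_add_mul_X_pow_iff (hdeg₀ v one_pos)).mpr
    fun h => hu0 (Submodule.disjoint_def.mp h u (mem_annihilator_contentIdeal_C.mpr huv) hu)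
  have hne₁ : C u + G * X ^ k ≠ 0 := fun h =>
    hG0 ((add_mul_X_pow_eq_zero_iff (hdeg₀ u (by omega))).mp h).2
  have hne₂ : C v + F * X ^ 1 ≠ 0 := fun h =>
    hv0 (C_eq_zero.mp ((add_mul_X_pow_eq_zero_iff (hdeg₀ v one_pos)).mp h).1)
  have hne : C u + G * X ^ k ≠ C v + F * X ^ 1 := by
    intro h
    have hdiff : C (u - v) + -F * X ^ 1 + G * X ^ k = 0 := by
      rw [C_sub, ← sub_eq_zero.mpr h]; ring
    exact hG0 ((add_mul_X_pow_eq_zero_iff (hdeg (u - v) (natDegree_neg F))).mp hdiff).2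
  rcases hC _ _ hzd₁ hne₁ hzd₂ hne₂ hne with h | h
  · have hprod : (C u + G * X ^ k) * (C v + F * X ^ 1) =
        C (u * v) + u • F * X ^ 1 + v • G * X ^ k + F * G * X ^ (k + 1) := by
      simp only [smul_eq_C_mul, C_mul]; ring
    rw [hprod, huv, mem_annihilator_contentIdeal.mp hu, hmul, C_0, zero_mul, zero_mul, zero_add,
      zero_add, add_zero] at h
    exact hv0 (Submodule.disjoint_def.mp hFG v hv
      (mem_annihilator_contentIdeal.mpr (mul_X_pow_eq_zero h)))
  · have hsum : C u + G * X ^ k + (C v + F * X ^ 1) = C (u + v) + F * X ^ 1 + G * X ^ k := by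
      rw [C_add]; ring
    rw [hsum, isZD_add_mul_X_pow_iff (hdeg (u + v) rfl),
      annihilator_contentIdeal_add_mul_X_pow (hdeg₀ (u + v) one_pos)] at h
    exact h (hFG.mono_left inf_le_right)

lemma eq_zero_or_eq_zero_of_mem_annihilator_contentIdeal {F G : R[X]}
    (hG : G.contentIdeal.annihilator ≠ ⊥)
    (hFG : Disjoint F.contentIdeal.annihilator G.contentIdeal.annihilator) (hmul : F * G = 0) :
    ∀ u ∈ F.contentIdeal.annihilator, ∀ v ∈ F.contentIdeal.annihilator,
      u * v = 0 → u = 0 ∨ v = 0 := by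
  intro u hu v hv huv
  by_contra! h
  obtain ⟨hu0, hv0⟩ := h
  have hG0 : G ≠ 0 := by
    rintro rfl
    simp only [contentIdeal_zero, Submodule.annihilator_bot, disjoint_top] at hFG
    exact hu0 (by simpa [hFG] using hu)
  have hCu : (C u).contentIdeal.annihilator ≠ ⊥ :=
    (Submodule.ne_bot_iff _).mpr ⟨v, mem_annihilator_contentIdeal_C.mpr (by rwa [mul_comm]), hv0⟩
  rcases smul_eq_zero_or_not_disjoint hC hCu hG with h | h
  · exact hu0 (Submodule.disjoint_def.mp hFG u hu (mem_annihilator_contentIdeal.mpr h))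
  · exact h (disjoint_annihilator_contentIdeal_C hC hG0 hFG hmul hu hv hu0 hv0 huv)

lemma embedsInProdDomains_of_disjoint {a : R} {G : R[X]}
    (ha : (C a).contentIdeal.annihilator ≠ ⊥) (hG : G.contentIdeal.annihilator ≠ ⊥)
    (haG : Disjoint (C a).contentIdeal.annihilator G.contentIdeal.annihilator) :
    EmbedsInProdDomains R := by
  have hsmul : a • G = 0 :=
    (smul_eq_zero_or_not_disjoint hC ha hG).resolve_right (not_not.mpr haG)
  have hmul : C a * G = 0 := by rwa [← smul_eq_C_mul]
  have hP := Ideal.isPrime_annihilator_of_mul_eq_zero ha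
    (eq_zero_or_eq_zero_of_mem_annihilator_contentIdeal hC hG haG hmul)
  have hQ := Ideal.isPrime_annihilator_of_mul_eq_zero hG
    (eq_zero_or_eq_zero_of_mem_annihilator_contentIdeal hC ha haG.symm (by rw [mul_comm, hmul]))
  refine embedsInProdDomains_iff.mpr
    ⟨_, _, hP, hQ, Submodule.disjoint_def.mpr fun r hrP hrQ => ?_⟩
  have hra : r ∈ (C a).contentIdeal.annihilator := mem_annihilator_contentIdeal_C.mpr
    (Submodule.mem_annihilator.mp hrQ a (mem_annihilator_contentIdeal.mpr hsmul))
  have hrG : r ∈ G.contentIdeal.annihilator := by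
    refine mem_annihilator_contentIdeal.mpr (ext fun j => ?_)
    simpa using Submodule.mem_annihilator.mp hrP _
      (mem_annihilator_contentIdeal_C.mpr (by simpa [mul_comm] using congr(coeff $hsmul j)))
  exact Submodule.disjoint_def.mp haG r hra hrG

end Complete

end Polynomial

theorem stmt6 (R : Type) [CommRing R] [Nontrivial R] :
    GTComplete (Polynomial R) ↔ (EmbedsInProdDomains R ∨ FinZDGenAnn R) := by
  refine ⟨fun hC => or_iff_not_imp_right.mpr fun hF => ?_, ?_⟩
  · simp only [finZDGenAnn_iff, not_forall, not_not] at hF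
    obtain ⟨s, hs, hann⟩ := hF
    obtain ⟨a, G, ha, hG, haG⟩ := exists_annihilator_contentIdeal_disjoint s hs hann
    exact embedsInProdDomains_of_disjoint hC ha hG haG
  · rintro (h | h)
    · obtain ⟨P, Q, _, _, hPQ⟩ := embedsInProdDomains_iff.mp (embedsInProdDomains_polynomial h)
      exact gtComplete_of_disjoint hPQ
    · exact gtComplete_of_finZDGenAnn h
end

section
/- For a commutative ring R with 1 ≠ 0, Γ̃(R) = Γ(R) if and only if Γ(R) is a complete graph. -/
/-- Γ̃(R) = Γ(R): distinct nonzero zero-divisors are adjacent in Γ̃(R) iff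
they are adjacent in the zero-divisor graph Γ(R). -/
def TildeEqGamma (R : Type) [CommRing R] : Prop :=
  ∀ x y : R, IsZD x → x ≠ 0 → IsZD y → y ≠ 0 → x ≠ y →
    ((x * y = 0 ∨ IsZD (x + y)) ↔ x * y = 0)

/-- Γ̃(R) = Z*(Γ(R)): distinct nonzero zero-divisors are adjacent in Γ̃(R) iff
they are adjacent in the total graph restricted to Z(R)*. -/
def TildeEqZStar (R : Type) [CommRing R] : Prop :=
  ∀ x y : R, IsZD x → x ≠ 0 → IsZD y → y ≠ 0 → x ≠ y →
    ((x * y = 0 ∨ IsZD (x + y)) ↔ IsZD (x + y))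

section

variable {R : Type} [CommRing R] {x y : R}

theorem IsZD.mul_right (hx : IsZD x) (r : R) : IsZD (x * r) := by
  obtain ⟨a, ha, hxa⟩ := hx
  exact ⟨a, ha, by linear_combination r * hxa⟩

theorem IsZD.neg (hx : IsZD x) : IsZD (-x) := by
  obtain ⟨a, ha, hxa⟩ := hx
  exact ⟨a, ha, by linear_combination -hxa⟩

theorem IsZD.add_of_mul_eq (hy : IsZD y) (h : x * y = x) : IsZD (x + y) := by
  obtain ⟨b, hb, hyb⟩ := hy
  exact ⟨b, hb, by linear_combination (1 + x) * hyb - b * h⟩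

namespace TildeEqGamma

theorem mul_eq_zero (h : TildeEqGamma R) (hx : IsZD x) (hx0 : x ≠ 0) (hy : IsZD y)
    (hy0 : y ≠ 0) (hxy : x ≠ y) (hs : IsZD (x + y)) : x * y = 0 :=
  (h x y hx hx0 hy hy0 hxy).mp (Or.inr hs)

theorem mul_mul_eq_zero (h : TildeEqGamma R) (hx : IsZD x) (hx0 : x ≠ 0) (hy : IsZD y)
    (hxy0 : x * y ≠ 0) (hs : ¬IsZD (x + y)) : x * (x * y) = 0 := by
  by_cases hx_eq : x = x * y
  · exact absurd (hy.add_of_mul_eq hx_eq.symm) hs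
  · refine h.mul_eq_zero hx hx0 (hx.mul_right y) hxy0 hx_eq ?_
    simpa only [mul_one_add] using hx.mul_right (1 + y)

end TildeEqGamma

end

theorem stmt10_general (R : Type) [CommRing R] :
    TildeEqGamma R ↔
      (∀ x y : R, IsZD x → x ≠ 0 → IsZD y → y ≠ 0 → x ≠ y → x * y = 0) := by
  constructor
  · intro h x y hx hx0 hy hy0 hxy
    by_contra hxy0
    have hs : ¬IsZD (x + y) := fun hs => hxy0 (h.mul_eq_zero hx hx0 hy hy0 hxy hs)
    have hx_xy := h.mul_mul_eq_zero hx hx0 hy hxy0 hs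
    have hy_yx := h.mul_mul_eq_zero hy hy0 hx (by rwa [mul_comm]) (by rwa [add_comm])
    have hdiff : IsZD (x + -y) := ⟨x * y, hxy0, by linear_combination hx_xy - hy_yx⟩
    have hx_ne : x ≠ -y := by
      rintro rfl
      exact hs ⟨y, hy0, by ring⟩
    have := h.mul_eq_zero hx hx0 hy.neg (neg_ne_zero.mpr hy0) hx_ne hdiff
    exact hxy0 (by linear_combination -this)
  · intro h x y hx hx0 hy hy0 hxy
    exact ⟨fun _ => h x y hx hx0 hy hy0 hxy, Or.inl⟩

theorem stmt10 (R : Type) [CommRing R] [Nontrivial R] :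
    TildeEqGamma R ↔
      (∀ x y : R, IsZD x → x ≠ 0 → IsZD y → y ≠ 0 → x ≠ y → x * y = 0) :=
  stmt10_general R
end

section
/- Let R be a commutative ring in which every non-unit is a zero-divisor. Then Γ̃(R) = Z*(Γ(R)) if and only if R has no idempotents other than 0 and 1. -/
lemma not_isZD_one {R : Type} [CommRing R] : ¬ IsZD (1 : R) := by
  rintro ⟨y, hy, h1y⟩
  exact hy (by simpa using h1y)

lemma eq_zero_or_eq_zero_of_mul_eq_zero_of_isUnit_add {R : Type} [CommRing R]
    (hid : ∀ e : R, IsIdempotentElem e → e = 0 ∨ e = 1) {x y : R} (hxy : x * y = 0)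
    (hu : IsUnit (x + y)) : x = 0 ∨ y = 0 := by
  obtain ⟨v, hv⟩ := isUnit_iff_exists_inv.mp hu
  have hx : x * (x * v) = x := by linear_combination x * hv - v * hxy
  have hy : y * (x * v) = 0 := by linear_combination v * hxy
  have he : IsIdempotentElem (x * v) := by
    unfold IsIdempotentElem
    linear_combination v * hx
  rcases hid _ he with h0 | h1
  · left
    rw [← hx, h0, mul_zero]
  · right
    rw [← hy, h1, mul_one]

lemma eq_zero_or_eq_one_of_tildeEqZStar {R : Type} [CommRing R] (ht : TildeEqZStar R)
    {e : R} (he : IsIdempotentElem e) : e = 0 ∨ e = 1 := by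
  by_contra! hc
  obtain ⟨he0, he1⟩ := hc
  have h1e : 1 - e ≠ 0 := sub_ne_zero.mpr (Ne.symm he1)
  have hprod : e * (1 - e) = 0 := he.mul_one_sub_self
  have hne : e ≠ 1 - e := fun h => he0 (he.eq.symm.trans ((congrArg (e * ·) h).trans hprod))
  have hsum := (ht e (1 - e) ⟨1 - e, h1e, hprod⟩ he0 ⟨e, he0, he.one_sub_mul_self⟩ h1e hne).mp
    (Or.inl hprod)
  rw [add_sub_cancel] at hsum
  exact not_isZD_one hsum

lemma tildeEqZStar_of_forall_isIdempotentElem {R : Type} [CommRing R]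
    (h : ∀ x : R, ¬ IsUnit x → IsZD x) (hid : ∀ e : R, IsIdempotentElem e → e = 0 ∨ e = 1) :
    TildeEqZStar R := by
  intro x y _ hx0 _ hy0 _
  refine ⟨?_, Or.inr⟩
  rintro (hxy | hzd)
  · by_contra hnzd
    have hu : IsUnit (x + y) := not_not.mp (mt (h _) hnzd)
    rcases eq_zero_or_eq_zero_of_mul_eq_zero_of_isUnit_add hid hxy hu with h0 | h0
    exacts [hx0 h0, hy0 h0]
  · exact hzd

theorem stmt14_general (R : Type) [CommRing R]
    (h : ∀ x : R, ¬ IsUnit x → IsZD x) :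
    TildeEqZStar R ↔ ∀ e : R, e * e = e → e = 0 ∨ e = 1 :=
  ⟨fun ht _ he => eq_zero_or_eq_one_of_tildeEqZStar ht he,
    fun hid => tildeEqZStar_of_forall_isIdempotentElem h hid⟩

theorem stmt14 (R : Type) [CommRing R] [Nontrivial R]
    (h : ∀ x : R, ¬ IsUnit x → IsZD x) :
    TildeEqZStar R ↔ ∀ e : R, e * e = e → e = 0 ∨ e = 1 :=
  stmt14_general R h
end

section
/- Let R be a reduced Noetherian commutative ring. Then Γ̃(R) = Z*(Γ(R)) if and only if Z(R) is an ideal of R. -/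
/-!
In a reduced ring the minimal primes intersect in `0`, so every zero-divisor lies in a minimal
prime. Suppose a reduced Noetherian ring had two distinct minimal primes, and fix one of them,
`P`. Since there are finitely many, there is `x ∉ P` lying in all the others, and by prime
avoidance some `y ∈ P` lying in none of the others. Then `x * y = 0`, so `x` and `y` are
adjacent in `Γ̃(R)`, but `x + y` lies in no minimal prime, so it is not a zero-divisor. Hence if
`Γ̃(R) = Z*(Γ(R))` there is at most one minimal prime, it is `0`, and `Z(R) = 0` is an ideal.
Conversely, if `Z(R)` is an ideal then `x + y ∈ Z(R)` for all `x, y ∈ Z(R)`.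
-/

section MinimalPrimes

variable {R : Type*} [CommRing R]

lemma eq_zero_of_forall_mem_minimalPrimes [IsReduced R] {a : R}
    (h : ∀ P ∈ minimalPrimes R, a ∈ P) : a = 0 := by
  have ha : a ∈ sInf (minimalPrimes R) := Ideal.mem_sInf.mpr h
  rwa [minimalPrimes, Ideal.sInf_minimalPrimes, Ideal.radical_bot_of_isReduced] at ha

lemma eq_of_le_of_mem_minimalPrimes {P Q : Ideal R} (hP : P ∈ minimalPrimes R)
    (hQ : Q ∈ minimalPrimes R) (h : Q ≤ P) : Q = P :=
  le_antisymm h (hP.2 hQ.1 h)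

lemma exists_notMem_forall_mem_minimalPrimes_ne (hfin : (minimalPrimes R).Finite) {P : Ideal R}
    (hP : P ∈ minimalPrimes R) : ∃ x ∉ P, ∀ Q ∈ minimalPrimes R, Q ≠ P → x ∈ Q := by
  classical
  have : ¬ (hfin.toFinset.erase P).inf id ≤ P := by
    intro hle
    obtain ⟨Q, hQ, hQP⟩ := (hP.1.1.inf_le' (f := id)).mp hle
    rw [Finset.mem_erase, Set.Finite.mem_toFinset] at hQ
    exact hQ.1 (eq_of_le_of_mem_minimalPrimes hP hQ.2 hQP)
  obtain ⟨x, hx, hxP⟩ := SetLike.not_le_iff_exists.mp this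
  refine ⟨x, hxP, fun Q hQ hQP => Submodule.mem_finsetInf.mp hx Q ?_⟩
  simpa [hQP] using hQ

lemma exists_mem_forall_notMem_minimalPrimes_ne (hfin : (minimalPrimes R).Finite) {P : Ideal R}
    (hP : P ∈ minimalPrimes R) : ∃ y ∈ P, ∀ Q ∈ minimalPrimes R, Q ≠ P → y ∉ Q := by
  classical
  have : ¬ (P : Set R) ⊆
      ⋃ Q ∈ (↑(hfin.toFinset.erase P) : Set (Ideal R)), (Q : Set R) := by
    rw [Ideal.subset_union_prime (f := fun Q : Ideal R => Q) P P fun Q hQ _ _ => ?_]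
    · rintro ⟨Q, hQ, hPQ⟩
      rw [Finset.mem_erase, Set.Finite.mem_toFinset] at hQ
      exact hQ.1 (eq_of_le_of_mem_minimalPrimes hQ.2 hP hPQ).symm
    · exact (hfin.mem_toFinset.mp (Finset.mem_of_mem_erase hQ)).1.1
  obtain ⟨y, hyP, hy⟩ := Set.not_subset.mp this
  refine ⟨y, hyP, fun Q hQ hQP hyQ => hy (Set.mem_biUnion ?_ hyQ)⟩
  simpa [hQP] using hQ

end MinimalPrimes

section ZeroDivisors

variable {R : Type} [CommRing R]

lemma IsZD.exists_mem_minimalPrimes [IsReduced R] {x : R} (hx : IsZD x) :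
    ∃ P ∈ minimalPrimes R, x ∈ P := by
  obtain ⟨y, hy, hxy⟩ := hx
  obtain ⟨P, hP, hyP⟩ : ∃ P ∈ minimalPrimes R, y ∉ P := by
    by_contra! h
    exact hy (eq_zero_of_forall_mem_minimalPrimes h)
  exact ⟨P, hP, (hP.1.1.mem_or_mem (hxy ▸ P.zero_mem)).resolve_right hyP⟩

lemma minimalPrimes_subsingleton_of_tildeEqZStar [IsReduced R]
    (hfin : (minimalPrimes R).Finite) (h : TildeEqZStar R) : (minimalPrimes R).Subsingleton := by
  intro P hP Q hQ
  by_contra hne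
  obtain ⟨x, hxP, hx⟩ := exists_notMem_forall_mem_minimalPrimes_ne hfin hP
  obtain ⟨y, hyP, hy⟩ := exists_mem_forall_notMem_minimalPrimes_ne hfin hP
  have hxQ : x ∈ Q := hx Q hQ (Ne.symm hne)
  have hyQ : y ∉ Q := hy Q hQ (Ne.symm hne)
  have hx0 : x ≠ 0 := fun h0 => hxP (h0 ▸ P.zero_mem)
  have hy0 : y ≠ 0 := fun h0 => hyQ (h0 ▸ Q.zero_mem)
  have hxy : x * y = 0 := eq_zero_of_forall_mem_minimalPrimes fun T hT => by
    by_cases hTP : T = P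
    · exact hTP ▸ P.mul_mem_left x hyP
    · exact T.mul_mem_right y (hx T hT hTP)
  have hsum : IsZD (x + y) :=
    (h x y ⟨y, hy0, hxy⟩ hx0 ⟨x, hx0, mul_comm y x ▸ hxy⟩ hy0
      fun e => hxP (e ▸ hyP)).mp (Or.inl hxy)
  obtain ⟨T, hT, hxyT⟩ := hsum.exists_mem_minimalPrimes
  by_cases hTP : T = P
  · subst hTP
    exact hxP (by simpa using T.sub_mem hxyT hyP)
  · exact hy T hT hTP (by simpa using T.sub_mem hxyT (hx T hT hTP))

lemma IsZD.eq_zero_of_subsingleton_minimalPrimes [IsReduced R] {x : R} (hx : IsZD x)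
    (hR : (minimalPrimes R).Subsingleton) : x = 0 := by
  obtain ⟨P, hP, hxP⟩ := hx.exists_mem_minimalPrimes
  exact eq_zero_of_forall_mem_minimalPrimes fun Q hQ => hR hP hQ ▸ hxP

lemma isZD_zero [Nontrivial R] : IsZD (0 : R) :=
  ⟨1, one_ne_zero, zero_mul 1⟩

lemma tildeEqZStar_of_isZD_add (h : ∀ x y : R, IsZD x → IsZD y → IsZD (x + y)) :
    TildeEqZStar R := fun x y hx _ hy _ _ =>
  ⟨fun _ => h x y hx hy, Or.inr⟩

end ZeroDivisors

theorem stmt16 (R : Type) [CommRing R] [Nontrivial R] [IsReduced R] [IsNoetherianRing R] :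
    TildeEqZStar R ↔ ∃ I : Ideal R, (I : Set R) = {x | IsZD x} := by
  constructor
  · intro h
    have hR := minimalPrimes_subsingleton_of_tildeEqZStar
      (minimalPrimes.finite_of_isNoetherianRing R) h
    exact ⟨⊥, Set.ext fun x => ⟨fun hx => Ideal.mem_bot.mp hx ▸ isZD_zero,
      fun hx => Ideal.mem_bot.mpr (hx.eq_zero_of_subsingleton_minimalPrimes hR)⟩⟩
  · rintro ⟨I, hI⟩
    have hmem (z : R) : z ∈ I ↔ IsZD z := Set.ext_iff.mp hI z
    exact tildeEqZStar_of_isZD_add fun x y hx hy =>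
      (hmem _).mp (I.add_mem ((hmem x).mpr hx) ((hmem y).mpr hy))
end
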